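/- Suppose in addition |v_j| < 1 for every j. Then the set G_ψ = {Q : Q is a state on ℂ^N and Tr(Q E_ψ) > |v_{j₀}|²} (where |v_{j₀}| = max_j |v_j|) is a convex set, is open in the set of all states on ℂ^N (with the Frobenius-norm topology), contains E_ψ, and contains no separable state. -/

import Mathlib

open Matrix BigOperators ComplexOrder

noncomputable section

/-- The Frobenius inner product `⟨A, B⟩ = Tr(Aᴴ B)`. -/
def frobInner {m : Type*} [Fintype m] (A B : Matrix m m ℂ) : ℂ :=
  (Aᴴ * B).trace

/-- The Frobenius norm associated to the Frobenius inner product. -/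
def frobNorm {m : Type*} [Fintype m] (A : Matrix m m ℂ) : ℝ :=
  Real.sqrt (frobInner A A).re

/-- A state (density matrix): a positive semidefinite (Hermitian) matrix of trace one. -/
def IsState {m : Type*} [Fintype m] (M : Matrix m m ℂ) : Prop :=
  M.PosSemidef ∧ M.trace = 1

/-- A pure state: a rank-one orthogonal projection, i.e. a Hermitian idempotent of trace one. -/
def IsPureState {m : Type*} [Fintype m] (M : Matrix m m ℂ) : Prop :=
  M.IsHermitian ∧ M * M = M ∧ M.trace = 1

/-- The Kronecker product of the matrices `A α`, realized on the tuple basis of the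
tensor product `ℂ^{n 0} ⊗ ⋯ ⊗ ℂ^{n (p-1)} ≃ ℂ^N`, `N = ∏ α, n α`. -/
def prodMat {p : ℕ} {n : Fin p → ℕ} (A : ∀ α, Matrix (Fin (n α)) (Fin (n α)) ℂ) :
    Matrix (∀ α, Fin (n α)) (∀ α, Fin (n α)) ℂ :=
  fun j k => ∏ α, A α (j α) (k α)

/-- A pure product state: a Kronecker product of pure states on the factors. -/
def IsPureProductState {p : ℕ} {n : Fin p → ℕ}
    (M : Matrix (∀ α, Fin (n α)) (∀ α, Fin (n α)) ℂ) : Prop :=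
  ∃ A : ∀ α, Matrix (Fin (n α)) (Fin (n α)) ℂ,
    (∀ α, IsPureState (A α)) ∧ M = prodMat A

/-- A (fully) separable state: a finite convex combination of pure product states. -/
def IsSeparableState {p : ℕ} {n : Fin p → ℕ}
    (M : Matrix (∀ α, Fin (n α)) (∀ α, Fin (n α)) ℂ) : Prop :=
  ∃ (k : ℕ) (c : Fin k → ℝ) (P : Fin k → Matrix (∀ α, Fin (n α)) (∀ α, Fin (n α)) ℂ),
    (∀ i, 0 ≤ c i) ∧ (∑ i, c i) = 1 ∧ (∀ i, IsPureProductState (P i)) ∧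
      M = ∑ i, (c i : ℂ) • P i

/-- The vector `ψ = ∑ j, v j • (e j ⊗ ⋯ ⊗ e j)`, where `e j` is the `j`-th standard basis
vector of each factor (embedded via `n 0 ≤ n α`). -/
def psiVec {p : ℕ} {n : Fin (p + 2) → ℕ} (hn : Monotone n) (v : Fin (n 0) → ℂ) :
    (∀ α, Fin (n α)) → ℂ :=
  fun x => ∑ j : Fin (n 0), v j *
    ∏ α, (if x α = Fin.castLE (hn (Fin.zero_le α)) j then (1 : ℂ) else 0)

/-- The pure state `E_ψ = |ψ⟩⟨ψ|`. -/
def Epsi {p : ℕ} {n : Fin (p + 2) → ℕ} (hn : Monotone n) (v : Fin (n 0) → ℂ) :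
    Matrix (∀ α, Fin (n α)) (∀ α, Fin (n α)) ℂ :=
  fun x y => psiVec hn v x * star (psiVec hn v y)

/-- The neighborhood `G_ψ = {Q : Q a state, Tr(Q E_ψ) > |v j₀|²}`. -/
def Gpsi {p : ℕ} {n : Fin (p + 2) → ℕ} (hn : Monotone n) (v : Fin (n 0) → ℂ)
    (j₀ : Fin (n 0)) : Set (Matrix (∀ α, Fin (n α)) (∀ α, Fin (n α)) ℂ) :=
  {Q | IsState Q ∧ ((‖v j₀‖ ^ 2 : ℝ) : ℂ) < (Q * Epsi hn v).trace}

/-! `Tr(Q E_ψ) = ⟨ψ, Q ψ⟩` is real and nonnegative on states and ℝ-linear in `Q`, so `G_ψ` is the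
intersection of the convex set of states with an open half-space, and `E_ψ ∈ G_ψ` because
`Tr(E_ψ²) = 1 > |v_{j₀}|²`. For a pure product state `P = ⊗ A_α`, the entries of each pure factor
satisfy `|A_{jk}| ≤ √A_{jj} √A_{kk}`, so `|⟨ψ, P ψ⟩| ≤ (∑ j, |v_j| t_j)²` with
`t_j = ∏ α, √(A_α)_{jj}`. Since there are at least two factors, Cauchy–Schwarz in the first two
gives `∑ j, t_j ≤ 1`, whence `Tr(P E_ψ) ≤ |v_{j₀}|²`; this bound passes to convex combinations. -/

open Finset

lemma star_dotProduct_self_eq_one {ι : Type*} [Fintype ι] {v : ι → ℂ}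
    (hv : ∑ j, ‖v j‖ ^ 2 = 1) : star v ⬝ᵥ v = 1 := by
  simp only [dotProduct, Pi.star_apply, Complex.star_def, Complex.conj_mul']
  exact_mod_cast hv

namespace IsPureState

variable {ι : Type*} [Fintype ι] {A : Matrix ι ι ℂ}

lemma apply_eq_sum_mul_star (hA : IsPureState A) (j k : ι) :
    A j k = ∑ l, A j l * star (A k l) := by
  conv_lhs => rw [← hA.2.1]
  exact sum_congr rfl fun l _ => by rw [hA.1.apply]

lemma diag_eq_sum_sq (hA : IsPureState A) (j : ι) :
    A j j = ((∑ l, ‖A j l‖ ^ 2 : ℝ) : ℂ) := by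
  rw [hA.apply_eq_sum_mul_star, Complex.ofReal_sum]
  exact sum_congr rfl fun l _ => by exact_mod_cast Complex.mul_conj' (A j l)

lemma re_diag_nonneg (hA : IsPureState A) (j : ι) : 0 ≤ (A j j).re := by
  rw [hA.diag_eq_sum_sq, Complex.ofReal_re]
  positivity

lemma norm_apply_le (hA : IsPureState A) (j k : ι) :
    ‖A j k‖ ≤ √(A j j).re * √(A k k).re := by
  rw [hA.apply_eq_sum_mul_star j k, hA.diag_eq_sum_sq j, hA.diag_eq_sum_sq k,
    Complex.ofReal_re, Complex.ofReal_re]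
  calc ‖∑ l, A j l * star (A k l)‖ ≤ ∑ l, ‖A j l‖ * ‖A k l‖ :=
        (norm_sum_le _ _).trans_eq (by simp only [norm_mul, norm_star])
    _ ≤ _ := Real.sum_mul_le_sqrt_mul_sqrt _ _ _

lemma sum_re_diag_comp_le_one (hA : IsPureState A) {κ : Type*} [Fintype κ] {e : κ → ι}
    (he : Function.Injective e) : ∑ j, (A (e j) (e j)).re ≤ 1 :=
  calc ∑ j, (A (e j) (e j)).re = ∑ i ∈ univ.map ⟨e, he⟩, (A i i).re :=
        (sum_map univ ⟨e, he⟩ fun i => (A i i).re).symm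
    _ ≤ ∑ i, (A i i).re :=
        sum_le_sum_of_subset_of_nonneg (subset_univ _) fun i _ _ => hA.re_diag_nonneg i
    _ = 1 := by simpa [trace, Complex.re_sum] using congrArg Complex.re hA.2.2

end IsPureState

lemma sum_prod_le_one_of_sum_sq_le_one {κ : Type*} [Fintype κ] {p : ℕ}
    (f : κ → Fin (p + 2) → ℝ) (hf0 : ∀ j α, 0 ≤ f j α) (hf1 : ∀ α, ∑ j, f j α ^ 2 ≤ 1) :
    ∑ j, ∏ α, f j α ≤ 1 := by
  have hle_one : ∀ j α, f j α ≤ 1 := fun j α =>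
    (pow_le_one_iff_of_nonneg (hf0 j α) two_ne_zero).1
      ((single_le_sum (fun j _ => sq_nonneg (f j α)) (mem_univ j)).trans (hf1 α))
  have hprod : ∀ j, ∏ α, f j α ≤ f j 0 * f j 1 := fun j => by
    rw [Fin.prod_univ_succ, Fin.prod_univ_succ]
    have hrest : ∏ α : Fin p, f j α.succ.succ ≤ 1 :=
      prod_le_one (fun α _ => hf0 j _) fun α _ => hle_one j _
    exact mul_le_mul_of_nonneg_left (mul_le_of_le_one_right (hf0 j 1) hrest) (hf0 j 0)
  have hcs : ∑ j, f j 0 * f j 1 ≤ 1 :=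
    (Real.sum_mul_le_sqrt_mul_sqrt _ _ _).trans <|
      mul_le_one₀ (Real.sqrt_le_one.2 (hf1 0)) (Real.sqrt_nonneg _) (Real.sqrt_le_one.2 (hf1 1))
  exact (sum_le_sum fun j _ => hprod j).trans hcs

lemma norm_star_dotProduct_mulVec_le {κ : Type*} [Fintype κ] (B : Matrix κ κ ℂ) (w : κ → ℂ)
    (t : κ → ℝ) (hB : ∀ j k, ‖B j k‖ ≤ t j * t k) :
    ‖star w ⬝ᵥ (B *ᵥ w)‖ ≤ (∑ j, ‖w j‖ * t j) ^ 2 := by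
  have hterm : ∀ j k, ‖star (w j) * (B j k * w k)‖ ≤ (‖w j‖ * t j) * (‖w k‖ * t k) := by
    intro j k
    rw [norm_mul, norm_mul, norm_star]
    calc ‖w j‖ * (‖B j k‖ * ‖w k‖) ≤ ‖w j‖ * (t j * t k * ‖w k‖) := by gcongr; exact hB j k
      _ = _ := by ring
  simp only [dotProduct, mulVec, Pi.star_apply, mul_sum]
  calc ‖∑ j, ∑ k, star (w j) * (B j k * w k)‖
      ≤ ∑ j, ∑ k, ‖star (w j) * (B j k * w k)‖ :=
        (norm_sum_le _ _).trans (sum_le_sum fun j _ => norm_sum_le _ _)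
    _ ≤ ∑ j, ∑ k, (‖w j‖ * t j) * (‖w k‖ * t k) :=
        sum_le_sum fun j _ => sum_le_sum fun k _ => hterm j k
    _ = _ := by rw [← sum_mul_sum, sq]

lemma convex_setOf_isState {m : Type*} [Fintype m] : Convex ℝ {Q : Matrix m m ℂ | IsState Q} := by
  rintro Q ⟨hQ, hQ1⟩ R ⟨hR, hR1⟩ a b ha hb hab
  refine ⟨(hQ.smul ha).add (hR.smul hb), ?_⟩
  rw [trace_add, trace_smul, trace_smul, hQ1, hR1, Complex.real_smul, Complex.real_smul]
  exact_mod_cast (by simpa using hab : (a : ℝ) * 1 + b * 1 = 1)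

section Frobenius

attribute [local instance] Matrix.frobeniusNormedAddCommGroup

variable {m : Type*} [Fintype m]

lemma frobNorm_eq_norm (A : Matrix m m ℂ) : frobNorm A = ‖A‖ := by
  rw [frobNorm, frobInner, frobenius_norm_def, ← Real.sqrt_eq_rpow]
  congr 1
  simp only [trace, diag_apply, mul_apply, conjTranspose_apply, Complex.re_sum, Real.rpow_two,
    Complex.star_def, Complex.conj_mul', ← Complex.ofReal_pow, Complex.ofReal_re]
  exact sum_comm

lemma exists_forall_frobNorm_sub_lt {f : Matrix m m ℂ → ℝ} (hf : Continuous f) {c : ℝ}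
    {Q : Matrix m m ℂ} (hQ : c < f Q) : ∃ ε > 0, ∀ R, frobNorm (R - Q) < ε → c < f R := by
  obtain ⟨ε, hε, hball⟩ := Metric.isOpen_iff.1 (isOpen_lt continuous_const hf) Q hQ
  exact ⟨ε, hε, fun R hR => hball (by rwa [Metric.mem_ball, dist_eq_norm, ← frobNorm_eq_norm])⟩

end Frobenius

section Psi

variable {p : ℕ} {n : Fin (p + 2) → ℕ} (hn : Monotone n) {v : Fin (n 0) → ℂ}

def diagIndex (j : Fin (n 0)) : ∀ α, Fin (n α) :=
  fun α => Fin.castLE (hn (Fin.zero_le α)) j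

lemma diagIndex_injective : Function.Injective (diagIndex hn) := fun j k h => by
  simpa [diagIndex] using congrFun h 0

lemma psiVec_eq_sum_single : psiVec hn v = ∑ j, v j • Pi.single (diagIndex hn j) 1 := by
  ext x
  simp [psiVec, prod_boole, Pi.single_apply, funext_iff, diagIndex]

lemma dotProduct_psiVec (w : (∀ α, Fin (n α)) → ℂ) :
    w ⬝ᵥ psiVec hn v = ∑ j, w (diagIndex hn j) * v j := by
  simp [psiVec_eq_sum_single, dotProduct_sum, dotProduct_smul, dotProduct_single, mul_comm]

lemma star_psiVec : star (psiVec hn v) = psiVec hn (star v) := by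
  simp [psiVec_eq_sum_single, star_sum]

lemma Epsi_eq_vecMulVec : Epsi hn v = vecMulVec (psiVec hn v) (star (psiVec hn v)) := rfl

lemma trace_mul_Epsi_eq_dotProduct (M : Matrix (∀ α, Fin (n α)) (∀ α, Fin (n α)) ℂ) :
    (M * Epsi hn v).trace = star (psiVec hn v) ⬝ᵥ (M *ᵥ psiVec hn v) := by
  rw [Epsi_eq_vecMulVec, mul_vecMulVec, trace_vecMulVec, dotProduct_comm]

lemma star_psiVec_dotProduct_mulVec (M : Matrix (∀ α, Fin (n α)) (∀ α, Fin (n α)) ℂ) :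
    star (psiVec hn v) ⬝ᵥ (M *ᵥ psiVec hn v)
      = star v ⬝ᵥ (M.submatrix (diagIndex hn) (diagIndex hn) *ᵥ v) := by
  rw [star_psiVec, dotProduct_comm, dotProduct_psiVec, dotProduct]
  refine sum_congr rfl fun j _ => ?_
  rw [mulVec, dotProduct_psiVec, mul_comm]
  rfl

lemma star_psiVec_dotProduct_self (hv : ∑ j, ‖v j‖ ^ 2 = 1) :
    star (psiVec hn v) ⬝ᵥ psiVec hn v = 1 := by
  have h := star_psiVec_dotProduct_mulVec hn (v := v) 1
  rwa [one_mulVec, submatrix_one _ (diagIndex_injective hn), one_mulVec,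
    star_dotProduct_self_eq_one hv] at h

lemma Epsi_posSemidef : (Epsi hn v).PosSemidef :=
  posSemidef_vecMulVec_self_star _

lemma Epsi_mul_self (hv : ∑ j, ‖v j‖ ^ 2 = 1) : Epsi hn v * Epsi hn v = Epsi hn v := by
  rw [Epsi_eq_vecMulVec, vecMulVec_mul_vecMulVec, star_psiVec_dotProduct_self hn hv, one_smul]

lemma trace_Epsi (hv : ∑ j, ‖v j‖ ^ 2 = 1) : (Epsi hn v).trace = 1 := by
  rw [Epsi_eq_vecMulVec, trace_vecMulVec, dotProduct_comm, star_psiVec_dotProduct_self hn hv]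

lemma Matrix.PosSemidef.trace_mul_Epsi_nonneg {Q : Matrix (∀ α, Fin (n α)) (∀ α, Fin (n α)) ℂ}
    (hQ : Q.PosSemidef) : 0 ≤ (Q * Epsi hn v).trace := by
  rw [trace_mul_Epsi_eq_dotProduct]
  exact hQ.dotProduct_mulVec_nonneg _

lemma norm_trace_prodMat_mul_Epsi_le {j₀ : Fin (n 0)} (hj₀ : ∀ j, ‖v j‖ ≤ ‖v j₀‖)
    {A : ∀ α, Matrix (Fin (n α)) (Fin (n α)) ℂ} (hA : ∀ α, IsPureState (A α)) :
    ‖(prodMat A * Epsi hn v).trace‖ ≤ ‖v j₀‖ ^ 2 := by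
  set t : Fin (n 0) → ℝ := fun j => ∏ α, √(A α (diagIndex hn j α) (diagIndex hn j α)).re
  have ht0 : ∀ j, 0 ≤ t j := fun j => prod_nonneg fun α _ => Real.sqrt_nonneg _
  have hentry : ∀ j k, ‖(prodMat A).submatrix (diagIndex hn) (diagIndex hn) j k‖ ≤ t j * t k := by
    intro j k
    simp only [submatrix_apply, prodMat, norm_prod, t, ← prod_mul_distrib]
    exact prod_le_prod (fun _ _ => norm_nonneg _) fun α _ => (hA α).norm_apply_le _ _
  have hsum_t : ∑ j, t j ≤ 1 := by
    refine sum_prod_le_one_of_sum_sq_le_one _ (fun _ _ => Real.sqrt_nonneg _) fun α => ?_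
    simpa only [Real.sq_sqrt ((hA α).re_diag_nonneg _)] using
      (hA α).sum_re_diag_comp_le_one (e := fun j => diagIndex hn j α) (Fin.castLE_injective _)
  have hvt : ∑ j, ‖v j‖ * t j ≤ ‖v j₀‖ :=
    calc ∑ j, ‖v j‖ * t j ≤ ∑ j, ‖v j₀‖ * t j :=
          sum_le_sum fun j _ => mul_le_mul_of_nonneg_right (hj₀ j) (ht0 j)
      _ ≤ ‖v j₀‖ := by
          rw [← mul_sum]
          exact mul_le_of_le_one_right (norm_nonneg _) hsum_t
  rw [trace_mul_Epsi_eq_dotProduct, star_psiVec_dotProduct_mulVec]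
  exact (norm_star_dotProduct_mulVec_le _ _ t hentry).trans <|
    pow_le_pow_left₀ (sum_nonneg fun j _ => mul_nonneg (norm_nonneg _) (ht0 j)) hvt 2

lemma IsSeparableState.re_trace_mul_Epsi_le {j₀ : Fin (n 0)} (hj₀ : ∀ j, ‖v j‖ ≤ ‖v j₀‖)
    {Q : Matrix (∀ α, Fin (n α)) (∀ α, Fin (n α)) ℂ} (hQ : IsSeparableState Q) :
    ((Q * Epsi hn v).trace).re ≤ ‖v j₀‖ ^ 2 := by
  obtain ⟨k, c, P, hc0, hc1, hP, rfl⟩ := hQ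
  have hPbound : ∀ i, ((P i * Epsi hn v).trace).re ≤ ‖v j₀‖ ^ 2 := fun i => by
    obtain ⟨A, hA, hPA⟩ := hP i
    rw [hPA]
    exact (Complex.re_le_norm _).trans (norm_trace_prodMat_mul_Epsi_le hn hj₀ hA)
  calc (((∑ i, (c i : ℂ) • P i) * Epsi hn v).trace).re
      = ∑ i, c i * ((P i * Epsi hn v).trace).re := by
        simp [Matrix.sum_mul, trace_sum, Complex.re_sum]
    _ ≤ ∑ i, c i * ‖v j₀‖ ^ 2 := sum_le_sum fun i _ => mul_le_mul_of_nonneg_left (hPbound i) (hc0 i)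
    _ = ‖v j₀‖ ^ 2 := by rw [← sum_mul, hc1, one_mul]

/-- In `ComplexOrder`, `a < z` also requires `z` to be real, which is automatic for states. -/
lemma mem_Gpsi_iff {j₀ : Fin (n 0)} {Q : Matrix (∀ α, Fin (n α)) (∀ α, Fin (n α)) ℂ} :
    Q ∈ Gpsi hn v j₀ ↔ IsState Q ∧ ‖v j₀‖ ^ 2 < ((Q * Epsi hn v).trace).re := by
  refine and_congr_right fun hQ => ?_
  have him := (Complex.nonneg_iff.1 (hQ.1.trace_mul_Epsi_nonneg hn (v := v))).2
  rw [Complex.lt_def, Complex.ofReal_re, Complex.ofReal_im, ← him, and_iff_left rfl]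

lemma Epsi_mem_Gpsi (hv : ∑ j, ‖v j‖ ^ 2 = 1) (hv1 : ∀ j, ‖v j‖ < 1) (j₀ : Fin (n 0)) :
    Epsi hn v ∈ Gpsi hn v j₀ := by
  refine (mem_Gpsi_iff hn).2 ⟨⟨Epsi_posSemidef hn, trace_Epsi hn hv⟩, ?_⟩
  rw [Epsi_mul_self hn hv, trace_Epsi hn hv, Complex.one_re]
  exact pow_lt_one₀ (norm_nonneg _) (hv1 j₀) two_ne_zero

end Psi

theorem Gpsi_convex_open_entangled_general {p : ℕ} {n : Fin (p + 2) → ℕ}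
    (hn : Monotone n)
    (v : Fin (n 0) → ℂ) (hv : ∑ j, ‖v j‖ ^ 2 = 1) (hv1 : ∀ j, ‖v j‖ < 1)
    (j₀ : Fin (n 0)) (hj₀ : ∀ j, ‖v j‖ ≤ ‖v j₀‖) :
    Convex ℝ (Gpsi hn v j₀) ∧
      (∀ Q ∈ Gpsi hn v j₀, ∃ ε > (0 : ℝ), ∀ R : Matrix (∀ α, Fin (n α)) (∀ α, Fin (n α)) ℂ,
        IsState R → frobNorm (R - Q) < ε → R ∈ Gpsi hn v j₀) ∧
      Epsi hn v ∈ Gpsi hn v j₀ ∧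
      (∀ Q ∈ Gpsi hn v j₀, ¬ IsSeparableState Q) := by
  have hGpsi : Gpsi hn v j₀ = {Q | IsState Q} ∩ {Q | ‖v j₀‖ ^ 2 < ((Q * Epsi hn v).trace).re} :=
    Set.ext fun Q => mem_Gpsi_iff hn
  have hcont : Continuous fun Q : Matrix (∀ α, Fin (n α)) (∀ α, Fin (n α)) ℂ =>
      ((Q * Epsi hn v).trace).re :=
    Complex.continuous_re.comp (continuous_id.matrix_mul continuous_const).matrix_trace
  refine ⟨?_, fun Q hQ => ?_, Epsi_mem_Gpsi hn hv hv1 j₀, fun Q hQ hsep => ?_⟩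
  · rw [hGpsi]
    refine convex_setOf_isState.inter (convex_halfSpace_gt ⟨fun Q R => ?_, fun c Q => ?_⟩ _)
    · simp [Matrix.add_mul]
    · simp
  · obtain ⟨ε, hε, hball⟩ := exists_forall_frobNorm_sub_lt hcont ((mem_Gpsi_iff hn).1 hQ).2
    exact ⟨ε, hε, fun R hR hRQ => (mem_Gpsi_iff hn).2 ⟨hR, hball R hRQ⟩⟩
  · exact ((mem_Gpsi_iff hn).1 hQ).2.not_ge (hsep.re_trace_mul_Epsi_le hn hj₀)

/-- Assume moreover `|v j| < 1` for every `j`.  Then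
`G_ψ = {Q state : Tr(Q E_ψ) > |v j₀|²}` is convex, is open in the set of all states
(in the Frobenius-norm topology), contains `E_ψ`, and contains no separable state. -/
theorem Gpsi_convex_open_entangled {p : ℕ} {n : Fin (p + 2) → ℕ}
    (hn : Monotone n) (hn₁ : 2 ≤ n 0)
    (v : Fin (n 0) → ℂ) (hv : ∑ j, ‖v j‖ ^ 2 = 1) (hv1 : ∀ j, ‖v j‖ < 1)
    (j₀ : Fin (n 0)) (hj₀ : ∀ j, ‖v j‖ ≤ ‖v j₀‖) :
    Convex ℝ (Gpsi hn v j₀) ∧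
      (∀ Q ∈ Gpsi hn v j₀, ∃ ε > (0 : ℝ), ∀ R : Matrix (∀ α, Fin (n α)) (∀ α, Fin (n α)) ℂ,
        IsState R → frobNorm (R - Q) < ε → R ∈ Gpsi hn v j₀) ∧
      Epsi hn v ∈ Gpsi hn v j₀ ∧
      (∀ Q ∈ Gpsi hn v j₀, ¬ IsSeparableState Q) :=
  Gpsi_convex_open_entangled_general hn v hv hv1 j₀ hj₀
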